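/- arXiv:2511.02498 — 5 statements merged into one kernel-verified Lean document; each statement's English description precedes it below -/
import Mathlib

section
/- Let K be a field with algebraic closure K̄, let G be a subgroup of K̄^× with G^n ⊆ K^× for a positive integer n coprime to char(K), and suppose the index |GK^×:K^×| is finite. Then the sequence 1 → μ_n(GK^×)K^×/K^× → GK^×/K^× → G^n K^{×n}/K^{×n} → 1 induced by n-th power exponentiation is exact. -/
/-! Everything happens inside the abelian group `K̄^×`: if `y ∈ GK^×` and `y^n = k^n` with
`k ∈ K^×`, then `y k⁻¹` is an `n`-th root of unity in `GK^×`, which gives exactness in the middle;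
surjectivity is `(GK^×)^n = G^n K^{×n}`. -/

open Subgroup

noncomputable section

/-- The multiplicative group `K^×` viewed inside `K̄^×`. -/
def KX (K Kbar : Type*) [Field K] [Field Kbar] [Algebra K Kbar] : Subgroup Kbarˣ :=
  (Units.map (algebraMap K Kbar).toMonoidHom).range

variable (K : Type*) {Kbar : Type*} [Field K] [Field Kbar] [Algebra K Kbar]

/-- The inclusion-induced map `μ_n(GK^×)K^×/K^× → GK^×/K^×` on quotients modulo `K^×`. -/
def leftMap (G : Subgroup Kbarˣ) (n : ℕ) :
    (↥(((powMonoidHom n).ker ⊓ (G ⊔ KX K Kbar)) ⊔ KX K Kbar) ⧸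
      ((KX K Kbar).subgroupOf (((powMonoidHom n).ker ⊓ (G ⊔ KX K Kbar)) ⊔ KX K Kbar))) →*
    (↥(G ⊔ KX K Kbar) ⧸ ((KX K Kbar).subgroupOf (G ⊔ KX K Kbar))) :=
  QuotientGroup.map _ _
    (Subgroup.inclusion (sup_le inf_le_right le_sup_right))
    (fun _ hx => hx)

/-- The `n`-th power map `GK^× → G^n K^{×n}` on subgroups of `K̄^×`. -/
def powHom (G : Subgroup Kbarˣ) (n : ℕ) :
    ↥(G ⊔ KX K Kbar) →* ↥(G.map (powMonoidHom n) ⊔ (KX K Kbar).map (powMonoidHom n)) :=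
  ((powMonoidHom n).domRestrict (G ⊔ KX K Kbar)).codRestrict _
    (fun a => by
      have h := Subgroup.mem_map_of_mem (powMonoidHom n) a.2
      rw [Subgroup.map_sup] at h
      exact h)

/-- The map `GK^×/K^× → G^n K^{×n}/K^{×n}` induced by raising to the `n`-th power. -/
def rightMap (G : Subgroup Kbarˣ) (n : ℕ) :
    (↥(G ⊔ KX K Kbar) ⧸ ((KX K Kbar).subgroupOf (G ⊔ KX K Kbar))) →*
    (↥(G.map (powMonoidHom n) ⊔ (KX K Kbar).map (powMonoidHom n)) ⧸
      (((KX K Kbar).map (powMonoidHom n)).subgroupOf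
        (G.map (powMonoidHom n) ⊔ (KX K Kbar).map (powMonoidHom n)))) :=
  QuotientGroup.map _ _ (powHom K G n)
    (fun a ha => by
      rw [Subgroup.mem_comap, Subgroup.mem_subgroupOf]
      exact Subgroup.mem_map_of_mem (powMonoidHom n) (Subgroup.mem_subgroupOf.mp ha))

section InclusionQuotient

variable {α : Type*} [Group α] {A B H : Subgroup α} [H.Normal] {hAB : A ≤ B}
  (hH : H.subgroupOf A ≤ (H.subgroupOf B).comap (inclusion hAB))

theorem QuotientGroup.map_inclusion_injective :
    Function.Injective (QuotientGroup.map _ _ (inclusion hAB) hH) := by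
  refine (injective_iff_map_eq_one _).2 fun x hx => ?_
  induction x using QuotientGroup.induction_on with
  | H a =>
    rw [QuotientGroup.map_mk, QuotientGroup.eq_one_iff, mem_subgroupOf, coe_inclusion] at hx
    rwa [QuotientGroup.eq_one_iff, mem_subgroupOf]

theorem QuotientGroup.mk_mem_range_map_inclusion_iff (hHA : H ≤ A) (b : B) :
    (b : B ⧸ H.subgroupOf B) ∈ (QuotientGroup.map _ _ (inclusion hAB) hH).range ↔
      (b : α) ∈ A := by
  constructor
  · rintro ⟨x, hx⟩
    induction x using QuotientGroup.induction_on with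
    | H a =>
      rw [QuotientGroup.map_mk, QuotientGroup.eq, mem_subgroupOf, coe_mul, coe_inv,
        coe_inclusion] at hx
      simpa using mul_mem a.2 (hHA hx)
  · intro hb
    exact ⟨(⟨b, hb⟩ : A), rfl⟩

end InclusionQuotient

theorem mem_sup_ker_powMonoidHom_iff {α : Type*} [CommGroup α] {B H : Subgroup α}
    (hHB : H ≤ B) (n : ℕ) {y : α} (hy : y ∈ B) :
    y ∈ (powMonoidHom n).ker ⊓ B ⊔ H ↔ y ^ n ∈ H.map (powMonoidHom n) := by
  constructor
  · intro h
    obtain ⟨z, hz, k, hk, rfl⟩ := mem_sup.1 h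
    have hzn : z ^ n = 1 := hz.1
    exact ⟨k, hk, by simp [mul_pow, hzn]⟩
  · rintro ⟨k, hk, hkn⟩
    have hker : y * k⁻¹ ∈ (powMonoidHom n).ker := by
      simp only [MonoidHom.mem_ker, powMonoidHom_apply] at hkn ⊢
      rw [mul_pow, inv_pow, hkn, mul_inv_cancel]
    have hyk : y * k⁻¹ * k = y := inv_mul_cancel_right y k
    rw [← hyk]
    exact mul_mem (mem_sup_left (mem_inf.2 ⟨hker, mul_mem hy (inv_mem (hHB hk))⟩))
      (mem_sup_right hk)

section PowerMap

variable {K}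

theorem powHom_surjective (G : Subgroup Kbarˣ) (n : ℕ) : Function.Surjective (powHom K G n) := by
  rintro ⟨y, hy⟩
  rw [← Subgroup.map_sup] at hy
  obtain ⟨x, hx, rfl⟩ := hy
  exact ⟨⟨x, hx⟩, rfl⟩

theorem rightMap_mk_eq_one_iff (G : Subgroup Kbarˣ) (n : ℕ) (y : ↥(G ⊔ KX K Kbar)) :
    rightMap K G n y = 1 ↔ (y : Kbarˣ) ^ n ∈ (KX K Kbar).map (powMonoidHom n) := by
  rw [rightMap, QuotientGroup.map_mk, QuotientGroup.eq_one_iff, mem_subgroupOf]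
  rfl

end PowerMap

theorem stmt0 (G : Subgroup Kbarˣ) (n : ℕ) :
    Function.Injective (leftMap K G n) ∧
    MonoidHom.ker (rightMap K G n) = MonoidHom.range (leftMap K G n) ∧
    Function.Surjective (rightMap K G n) := by
  refine ⟨QuotientGroup.map_inclusion_injective _, ?_, ?_⟩
  · ext x
    induction x using QuotientGroup.induction_on with
    | H y =>
      rw [MonoidHom.mem_ker, rightMap_mk_eq_one_iff,
        ← mem_sup_ker_powMonoidHom_iff le_sup_right n y.2]
      exact (QuotientGroup.mk_mem_range_map_inclusion_iff _ le_sup_right y).symm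
  · exact QuotientGroup.map_surjective_of_surjective _ _ _
      (QuotientGroup.mk_surjective.comp (powHom_surjective G n)) _

end
end

section
/- Let K be a field, K̄ an algebraic closure, G ≤ K̄^× with G^n ⊆ K^× for n coprime to char(K) and |GK^×:K^×| finite. Then |GK^×:K^×| = |G^n K^{×n}:K^{×n}| · |μ_n(GK^×) : μ_n(K^×)|. -/
/-!
The `n`-th power map `x ↦ xⁿ` sends `GK^×` onto `Gⁿ K^{×n}`, and its kernel on `GK^×` is
`μ_n(GK^×)`. For any homomorphism `φ` of an abelian group and subgroups `A ≤ B`, the intermediate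
subgroup `A (ker φ ∩ B)` splits `|B : A|` into `|B : A (ker φ ∩ B)| = |φ B : φ A|` (it is the
preimage of `φ A` in `B`) and `|A (ker φ ∩ B) : A| = |ker φ ∩ B : ker φ ∩ A|` (second isomorphism
theorem).
-/

namespace Subgroup

variable {G H : Type*} [CommGroup G] [Group H] {A B : Subgroup G}

theorem relIndex_sup_inf_eq_relIndex_inf (N : Subgroup G) (hAB : A ≤ B) :
    A.relIndex (A ⊔ N ⊓ B) = (N ⊓ A).relIndex (N ⊓ B) := by
  rw [relIndex_sup_left, ← inf_relIndex_right A (N ⊓ B), inf_left_comm, inf_eq_left.mpr hAB]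

theorem relIndex_sup_inf_ker_eq_relIndex_map (φ : G →* H) (hAB : A ≤ B) :
    (A ⊔ φ.ker ⊓ B).relIndex B = (A.map φ).relIndex (B.map φ) := by
  rw [← sup_inf_assoc_of_le φ.ker hAB, inf_relIndex_right, ← comap_map_eq, relIndex_comap]

theorem relIndex_map_mul_relIndex_inf_ker (φ : G →* H) (hAB : A ≤ B) :
    (A.map φ).relIndex (B.map φ) * (φ.ker ⊓ A).relIndex (φ.ker ⊓ B) = A.relIndex B := by
  rw [← relIndex_sup_inf_ker_eq_relIndex_map φ hAB, ← relIndex_sup_inf_eq_relIndex_inf _ hAB,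
    mul_comm, relIndex_mul_relIndex _ _ _ le_sup_left (sup_le hAB inf_le_right)]

end Subgroup

theorem stmt1_general (Kbar : Type*) [Field Kbar] (G : Subgroup Kbarˣ) (n : ℕ)
    (KX : Subgroup Kbarˣ) :
    KX.relIndex (G ⊔ KX) =
      (KX.map (powMonoidHom n)).relIndex
          (G.map (powMonoidHom n) ⊔ KX.map (powMonoidHom n)) *
        ((powMonoidHom n).ker ⊓ KX).relIndex ((powMonoidHom n).ker ⊓ (G ⊔ KX)) := by
  rw [← Subgroup.map_sup, Subgroup.relIndex_map_mul_relIndex_inf_ker _ le_sup_right]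

/-- If `G` is a group of radicals over `K` with `G^n ⊆ K^×` (`n` coprime to `char K`) and
finite index `|GK^× : K^×|`, then
`|GK^× : K^×| = |G^n K^{×n} : K^{×n}| ⋅ |μ_n(GK^×) : μ_n(K^×)|`. -/
theorem stmt1 (K Kbar : Type*) [Field K] [Field Kbar] [Algebra K Kbar]
    [IsAlgClosure K Kbar] (G : Subgroup Kbarˣ) (n : ℕ) (hn : 0 < n)
    (hchar : (n : K) ≠ 0)
    (KX : Subgroup Kbarˣ) (hKX : KX = (Units.map (algebraMap K Kbar).toMonoidHom).range)
    (hG : G.map (powMonoidHom n) ≤ KX)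
    (hfin : KX.relIndex (G ⊔ KX) ≠ 0) :
    KX.relIndex (G ⊔ KX) =
      (KX.map (powMonoidHom n)).relIndex
          (G.map (powMonoidHom n) ⊔ KX.map (powMonoidHom n)) *
        ((powMonoidHom n).ker ⊓ KX).relIndex ((powMonoidHom n).ker ⊓ (G ⊔ KX)) :=
  stmt1_general Kbar G n KX
end

section
/- Let K be a field of characteristic 0 such that K ∩ ℚ(ζ_{2^∞}) is totally real, and let w ≥ 2 be such that ξ_{2^w} = ζ_{2^w} + ζ_{2^w}^{-1} ∈ K but ξ_{2^{w+1}} ∉ K. Then −(ξ_{2^w} + 2) is not a square in K^×. -/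
/-! Writing `ζ` for a primitive `2^(w+1)`-th root of unity, `-(ζ² + ζ⁻² + 2) = (i (ζ + ζ⁻¹))²`,
so a square root `b` of it is `± i (ζ + ζ⁻¹)`. This lies in `ℚ(ζ_{2^∞})`, so if `b ∈ K` it is
real by total reality; but `ζ + ζ⁻¹ = 2 Re ζ` is a nonzero real number once `w ≥ 2`, so `b` is
purely imaginary and nonzero. -/

lemma add_inv_sq_eq {F : Type*} [Field F] {ζ : F} (hζ : ζ ≠ 0) :
    (ζ + ζ⁻¹) ^ 2 = ζ ^ 2 + (ζ ^ 2)⁻¹ + 2 := by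
  field_simp
  ring

lemma IsPrimitiveRoot.add_inv_ne_zero {F : Type*} [Field F] {ζ : F} {n : ℕ}
    (hζ : IsPrimitiveRoot ζ n) (hn0 : n ≠ 0) (hn : ¬n ∣ 4) : ζ + ζ⁻¹ ≠ 0 := by
  intro h
  have hζ0 : ζ ≠ 0 := hζ.ne_zero hn0
  have hsq : ζ ^ 2 = -1 := by
    field_simp at h
    linear_combination h
  exact hn (hζ.dvd_of_pow_eq_one 4 (by rw [show 4 = 2 * 2 from rfl, pow_mul, hsq]; norm_num))

lemma Complex.add_inv_eq_ofReal_of_norm_eq_one {ζ : ℂ} (h : ‖ζ‖ = 1) :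
    ζ + ζ⁻¹ = ↑(2 * ζ.re) := by
  rw [Complex.inv_eq_conj h, Complex.add_conj]

theorem stmt9_general (K : Subfield ℂ) (Q2 : Subfield ℂ)
    (hQ2 : Q2 = Subfield.closure {z : ℂ | ∃ t : ℕ, z ^ 2 ^ t = 1})
    (htr : ∀ f : ↥(K ⊓ Q2) →+* ℂ, ∀ x : ↥(K ⊓ Q2), (f x).im = 0)
    (w : ℕ) (hw : 2 ≤ w) (ζ : ℂ) (hζ : IsPrimitiveRoot ζ (2 ^ (w + 1))) :
    ¬∃ b ∈ K, b ^ 2 = -((ζ ^ 2 + (ζ ^ 2)⁻¹) + 2) := by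
  rintro ⟨b, hbK, hb2⟩
  have hs0 : ζ + ζ⁻¹ ≠ 0 := hζ.add_inv_ne_zero (by positivity) fun h ↦ by
    have := Nat.le_of_dvd (by norm_num) h
    have : 2 ^ 3 ≤ 2 ^ (w + 1) := Nat.pow_le_pow_right (by norm_num) (by omega)
    omega
  have hb : b = Complex.I * (ζ + ζ⁻¹) ∨ b = -(Complex.I * (ζ + ζ⁻¹)) := by
    rw [← sq_eq_sq_iff_eq_or_eq_neg, hb2, mul_pow, Complex.I_sq,
      add_inv_sq_eq (hζ.ne_zero (by positivity))]
    ring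
  have hbQ2 : b ∈ Q2 := by
    have hζQ2 : ζ ∈ Q2 := hQ2 ▸ Subfield.subset_closure ⟨w + 1, hζ.pow_eq_one⟩
    have hIQ2 : Complex.I ∈ Q2 :=
      hQ2 ▸ Subfield.subset_closure ⟨2, by norm_num [pow_succ, Complex.I_sq]⟩
    have hcQ2 := Q2.mul_mem hIQ2 (Q2.add_mem hζQ2 (Q2.inv_mem hζQ2))
    rcases hb with rfl | rfl
    exacts [hcQ2, Q2.neg_mem hcQ2]
  have hbim : b.im = 0 := htr (K ⊓ Q2).subtype ⟨b, hbK, hbQ2⟩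
  rw [Complex.add_inv_eq_ofReal_of_norm_eq_one (hζ.norm'_eq_one (by positivity))] at hs0 hb
  rcases hb with rfl | rfl <;> simp_all

set_option synthInstance.maxHeartbeats 800000 in
/-- Let `K ⊆ ℂ` be such that `K ∩ ℚ(ζ_{2^∞})` is totally real, and let `w ≥ 2` be such
that `ξ_{2^w} = ζ_{2^w} + ζ_{2^w}⁻¹ ∈ K` but `ξ_{2^{w+1}} ∉ K` (here `ζ_{2^w} = ζ²` for a
primitive `2^{w+1}`-th root of unity `ζ`). Then `-(ξ_{2^w} + 2)` is not a square in `K^×`. -/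
theorem stmt9 (K : Subfield ℂ) (Q2 : Subfield ℂ)
    (hQ2 : Q2 = Subfield.closure {z : ℂ | ∃ t : ℕ, z ^ 2 ^ t = 1})
    (htr : ∀ f : ↥(K ⊓ Q2) →+* ℂ, ∀ x : ↥(K ⊓ Q2), (f x).im = 0)
    (w : ℕ) (hw : 2 ≤ w) (ζ : ℂ) (hζ : IsPrimitiveRoot ζ (2 ^ (w + 1)))
    (hξw : ζ ^ 2 + (ζ ^ 2)⁻¹ ∈ K) (hξw1 : ζ + ζ⁻¹ ∉ K) :
    ¬∃ b ∈ K, b ^ 2 = -((ζ ^ 2 + (ζ ^ 2)⁻¹) + 2) :=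
  stmt9_general K Q2 hQ2 htr w hw ζ hζ
end

section
/- Let K be a field of odd characteristic with ζ₄ ∉ K, and let w ≥ 2 be such that ξ_{2^w} = ζ_{2^w}+ζ_{2^w}^{-1} ∈ K^× but ξ_{2^{w+1}} ∉ K^×. Then −(ξ_{2^w}+2) is a square in K^×. -/
/-!
Since `(ζ + ζ⁻¹)² = ξ_{2^w} + 2` and `ζ + ζ⁻¹ ∉ K`, the element `ξ_{2^w} + 2` is not a square
in `K`, and neither is `-1`. Both lie in the finite subfield of `K` they generate over `𝔽_p`
(`ζ` is a root of unity), and in a finite field the product of two non-squares is a square.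
-/

open IntermediateField

theorem FiniteField.isSquare_mul_of_not_isSquare {F : Type*} [Field F] [Finite F]
    {a b : F} (ha : ¬IsSquare a) (hb : ¬IsSquare b) : IsSquare (a * b) := by
  classical
  have := Fintype.ofFinite F
  have ha0 : a ≠ 0 := by rintro rfl; exact ha .zero
  have hb0 : b ≠ 0 := by rintro rfl; exact hb .zero
  rw [← quadraticChar_one_iff_isSquare (mul_ne_zero ha0 hb0), map_mul,
    quadraticChar_neg_one_iff_not_isSquare.mpr ha, quadraticChar_neg_one_iff_not_isSquare.mpr hb]
  norm_num

theorem isSquare_mul_of_isIntegral_zmod {K : Type*} [Field K] {p : ℕ} [Fact p.Prime]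
    [Algebra (ZMod p) K] {a b : K} (ha : IsIntegral (ZMod p) a) (hb : IsIntegral (ZMod p) b)
    (ha' : ¬IsSquare a) (hb' : ¬IsSquare b) : IsSquare (a * b) := by
  let F := (ZMod p)⟮a, b⟯
  have : FiniteDimensional (ZMod p) F := finiteDimensional_adjoin_pair ha hb
  have : Finite F := Module.finite_of_finite (ZMod p)
  let a' : F := ⟨a, subset_adjoin _ _ (by simp)⟩
  let b' : F := ⟨b, subset_adjoin _ _ (by simp)⟩
  have hsq : IsSquare (a' * b') := FiniteField.isSquare_mul_of_not_isSquare
    (fun h ↦ ha' (h.map F.val)) (fun h ↦ hb' (h.map F.val))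
  exact hsq.map F.val

theorem not_isSquare_of_algebraMap_eq_sq {K L : Type*} [CommRing K] [CommRing L]
    [NoZeroDivisors L] [Algebra K L] {a : K} {s : L} (h : algebraMap K L a = s ^ 2)
    (hs : s ∉ (algebraMap K L).range) : ¬IsSquare a := by
  rintro ⟨c, rfl⟩
  rw [map_mul, ← sq, sq_eq_sq_iff_eq_or_eq_neg] at h
  rcases h with h | h
  · exact hs ⟨c, h⟩
  · exact hs ⟨-c, by rw [map_neg, h, neg_neg]⟩

theorem add_inv_sq {L : Type*} [Field L] {ζ : L} (h : ζ ≠ 0) :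
    (ζ + ζ⁻¹) ^ 2 = ζ ^ 2 + (ζ ^ 2)⁻¹ + 2 := by
  field_simp; ring

theorem stmt10_general (K Kbar : Type*) [Field K] [Field Kbar] [Algebra K Kbar]
    (p : ℕ) (hp : p.Prime) [CharP K p]
    (hζ4 : ¬∃ i : K, i ^ 2 = -1)
    (w : ℕ) (ζ : Kbar) (hζ : IsPrimitiveRoot ζ (2 ^ (w + 1)))
    (hξw : ζ ^ 2 + (ζ ^ 2)⁻¹ ∈ (algebraMap K Kbar).range)
    (hξw1 : ζ + ζ⁻¹ ∉ (algebraMap K Kbar).range) :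
    ∃ b : K, algebraMap K Kbar b ^ 2 = -((ζ ^ 2 + (ζ ^ 2)⁻¹) + 2) := by
  have : Fact p.Prime := ⟨hp⟩
  let := ZMod.algebra K p
  obtain ⟨x, hx⟩ := hξw
  have hx_add_two : algebraMap K Kbar (x + 2) = (ζ + ζ⁻¹) ^ 2 := by
    rw [add_inv_sq (hζ.ne_zero (by positivity)), map_add, hx, map_ofNat]
  have h_int : IsIntegral (ZMod p) (x + 2) := by
    have h := ((hζ.isIntegral (by positivity)).add (hζ.inv.isIntegral (by positivity))).pow 2
    rw [← hx_add_two, isIntegral_algebraMap_iff (algebraMap K Kbar).injective] at h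
    exact h.tower_top
  have h_neg_one : ¬IsSquare (-1 : K) := fun ⟨i, hi⟩ ↦ hζ4 ⟨i, by rw [sq, hi]⟩
  obtain ⟨b, hb⟩ := isSquare_mul_of_isIntegral_zmod isIntegral_one.neg h_int h_neg_one
    (not_isSquare_of_algebraMap_eq_sq hx_add_two hξw1)
  refine ⟨b, ?_⟩
  rw [← map_pow, sq, ← hb, neg_one_mul, map_neg, map_add, hx, map_ofNat]

/-- Let `K` be a field of odd characteristic with `ζ₄ ∉ K`, and `w ≥ 2` with
`ξ_{2^w} = ζ_{2^w} + ζ_{2^w}⁻¹ ∈ K^×` but `ξ_{2^{w+1}} ∉ K^×` (where `ζ_{2^w} = ζ²` for a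
primitive `2^{w+1}`-th root of unity `ζ` in `K̄`). Then `-(ξ_{2^w} + 2)` is a square in `K^×`. -/
theorem stmt10 (K Kbar : Type*) [Field K] [Field Kbar] [Algebra K Kbar]
    [IsAlgClosure K Kbar]
    (p : ℕ) (hp : p.Prime) [CharP K p] (hp2 : p ≠ 2)
    (hζ4 : ¬∃ i : K, i ^ 2 = -1)
    (w : ℕ) (hw : 2 ≤ w) (ζ : Kbar) (hζ : IsPrimitiveRoot ζ (2 ^ (w + 1)))
    (hξw : ζ ^ 2 + (ζ ^ 2)⁻¹ ∈ (algebraMap K Kbar).range)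
    (hξw1 : ζ + ζ⁻¹ ∉ (algebraMap K Kbar).range) :
    ∃ b : K, algebraMap K Kbar b ^ 2 = -((ζ ^ 2 + (ζ ^ 2)⁻¹) + 2) :=
  stmt10_general K Kbar p hp hζ4 w ζ hζ hξw hξw1
end

section
/- Let K be a field and a ∈ K^×, n ≥ 1 not divisible by char(K). The extension K(ζ_n, a^{1/n})/K is abelian if and only if there exist m | n with ζ_m ∈ K and b ∈ K^× such that a^m = b^n. (Schinzel's theorem on abelian radical extensions.) -/
/-!
Write `σ ζ = ζ ^ (t σ + 1)` and `σ r = ζ ^ (x σ) * r` for `σ` in the Galois group. Since `ζ` and `r`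
generate the extension, `σ` and `τ` commute iff `t σ * x τ = t τ * x σ` in `ZMod n`, and
`ζ ^ k * r ^ m` lies in `K` iff `t σ * k + x σ * m = 0` for all `σ`.

If the group is abelian, let `m ∣ n` generate the ideal of `ZMod n` spanned by the `t σ` and write
`m = ∑ c σ * t σ`. Then `ζ ^ (n / m)` is a primitive `m`-th root of unity in `K`, and with
`y = ∑ c σ * x σ` the commutation relations give `m * x τ = t τ * y`, so `b = ζ ^ (-y) * r ^ m`
lies in `K` and `b ^ n = a ^ m`. Conversely, `ζ ^ (n / m) ∈ K` forces `m ∣ t σ`, and writing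
`r ^ m = ζ ^ k * b` gives `m * x σ = k * t σ`, from which the commutation relations follow.
-/

open IntermediateField Polynomial

theorem ZMod.exists_dvd_and_eq_span_natCast {n : ℕ} (J : Ideal (ZMod n)) :
    ∃ m : ℕ, m ∣ n ∧ J = Ideal.span {(m : ZMod n)} := by
  obtain ⟨g, hg⟩ := (IsPrincipalIdealRing.principal (J.comap (Int.castRingHom (ZMod n)))).principal
  have hspan : J.comap (Int.castRingHom (ZMod n)) = Ideal.span {(g.natAbs : ℤ)} := by
    rw [Int.span_natAbs]; exact hg
  refine ⟨g.natAbs, ?_, ?_⟩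
  · have hn : (n : ℤ) ∈ J.comap (Int.castRingHom (ZMod n)) := by simp
    rw [hspan, Ideal.mem_span_singleton] at hn
    exact_mod_cast hn
  · rw [← Ideal.map_comap_of_surjective (Int.castRingHom (ZMod n)) ZMod.intCast_surjective J,
      hspan, Ideal.map_span, Set.image_singleton]
    simp

theorem ZMod.exists_eq_mul_of_mul_eq_zero {m d : ℕ} (hd : d ≠ 0) {t : ZMod (m * d)}
    (h : t * d = 0) : ∃ u : ZMod (m * d), t = m * u := by
  rw [← ZMod.intCast_zmod_cast t, ← Int.cast_natCast d, ← Int.cast_mul,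
    ZMod.intCast_zmod_eq_zero_iff_dvd, Nat.cast_mul] at h
  obtain ⟨u, hu⟩ := Int.dvd_of_mul_dvd_mul_right (by exact_mod_cast hd) h
  exact ⟨u, by rw [← ZMod.intCast_zmod_cast t, hu]; push_cast; ring⟩

theorem Finset.sum_mul_mul_eq_mul_sum_mul {ι R : Type*} [CommRing R] (s : Finset ι)
    {c t x : ι → R} (h : ∀ i j, t i * x j = t j * x i) (j : ι) :
    (∑ i ∈ s, c i * t i) * x j = t j * ∑ i ∈ s, c i * x i := by
  rw [Finset.sum_mul, Finset.mul_sum]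
  exact Finset.sum_congr rfl fun i _ ↦ by linear_combination c i * h i j

theorem IntermediateField.algHom_ext_of_adjoin_eq_top {F E M : Type*} [Field F] [Field E]
    [Field M] [Algebra F E] [Algebra F M] {s : Set E} (hs : adjoin F s = ⊤) {φ₁ φ₂ : E →ₐ[F] M}
    (h : Set.EqOn φ₁ φ₂ s) : φ₁ = φ₂ := by
  ext x
  have hx : x ∈ adjoin F s := hs ▸ mem_top
  induction hx using adjoin_induction with
  | mem x hx => exact h hx
  | algebraMap c => simp
  | add x y _ _ hx hy => simp [hx, hy]
  | inv x _ hx => simp [hx]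
  | mul x y _ _ hx hy => simp [hx, hy]

namespace IsPrimitiveRoot

variable {L : Type*} [Field L] {n : ℕ} {ζ : L}

theorem zpow_eq_zpow_iff [NeZero n] (hζ : IsPrimitiveRoot ζ n) {i j : ℤ} :
    ζ ^ i = ζ ^ j ↔ (i : ZMod n) = j := by
  have hζ0 : ζ ≠ 0 := hζ.ne_zero (NeZero.ne n)
  rw [ZMod.intCast_eq_intCast_iff_dvd_sub, ← hζ.zpow_eq_one_iff_dvd, zpow_sub₀ hζ0,
    div_eq_one_iff_eq (zpow_ne_zero _ hζ0), eq_comm]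

theorem exists_zpow_mul_eq_of_pow_eq_pow [NeZero n] (hζ : IsPrimitiveRoot ζ n) {y v : L}
    (hv : v ≠ 0) (h : y ^ n = v ^ n) : ∃ k : ℤ, y = ζ ^ k * v := by
  obtain ⟨i, -, hi⟩ :=
    hζ.eq_pow_of_pow_eq_one (ξ := y / v) (by rw [div_pow, h, div_self (pow_ne_zero _ hv)])
  exact ⟨i, by rw [zpow_natCast, hi, div_mul_cancel₀ _ hv]⟩

end IsPrimitiveRoot

section AlgEquiv

variable {K L : Type*} [Field K] [Field L] [Algebra K L] {n : ℕ} [NeZero n] {ζ w : L}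
  {σ τ : Gal(L/K)} {t x t' x' : ℤ}

theorem apply_zpow_mul_pow_eq (hζ : IsPrimitiveRoot ζ n) (ht : σ ζ = ζ ^ (t + 1))
    (hx : σ w = ζ ^ x * w) (k : ℤ) (m : ℕ) :
    σ (ζ ^ k * w ^ m) = ζ ^ (t * k + x * m) * (ζ ^ k * w ^ m) := by
  have hζ0 : ζ ≠ 0 := hζ.ne_zero (NeZero.ne n)
  rw [map_mul, map_zpow₀, map_pow, ht, hx, mul_pow, ← zpow_natCast (ζ ^ x), ← zpow_mul,
    ← zpow_mul, add_mul, one_mul, zpow_add₀ hζ0, zpow_add₀ hζ0]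
  ring

theorem apply_zpow_mul_pow_eq_self_iff (hζ : IsPrimitiveRoot ζ n) (hw : w ≠ 0)
    (ht : σ ζ = ζ ^ (t + 1)) (hx : σ w = ζ ^ x * w) (k : ℤ) (m : ℕ) :
    σ (ζ ^ k * w ^ m) = ζ ^ k * w ^ m ↔ (t : ZMod n) * k + x * m = 0 := by
  have hζ0 : ζ ≠ 0 := hζ.ne_zero (NeZero.ne n)
  rw [apply_zpow_mul_pow_eq hζ ht hx, mul_eq_right₀ (mul_ne_zero (zpow_ne_zero _ hζ0)
    (pow_ne_zero _ hw)), hζ.zpow_eq_one_iff_dvd, ← ZMod.intCast_zmod_eq_zero_iff_dvd]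
  push_cast
  rfl

theorem algEquiv_mul_comm_iff (hζ : IsPrimitiveRoot ζ n) (hw : w ≠ 0) (hgen : K⟮ζ, w⟯ = ⊤)
    (ht : σ ζ = ζ ^ (t + 1)) (hx : σ w = ζ ^ x * w)
    (ht' : τ ζ = ζ ^ (t' + 1)) (hx' : τ w = ζ ^ x' * w) :
    σ * τ = τ * σ ↔ (t : ZMod n) * x' = t' * x := by
  have hζ0 : ζ ≠ 0 := hζ.ne_zero (NeZero.ne n)
  have hζ_comm : (σ * τ) ζ = (τ * σ) ζ := by
    simp only [AlgEquiv.mul_apply, ht, ht', map_zpow₀, ← zpow_mul, mul_comm]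
  have hw_comm : (σ * τ) w = (τ * σ) w ↔ (t : ZMod n) * x' = t' * x := by
    rw [AlgEquiv.mul_apply, AlgEquiv.mul_apply, hx, hx', ← pow_one w,
      apply_zpow_mul_pow_eq hζ ht hx, apply_zpow_mul_pow_eq hζ ht' hx', pow_one,
      ← mul_assoc, ← mul_assoc, ← zpow_add₀ hζ0, ← zpow_add₀ hζ0,
      mul_left_inj' hw, hζ.zpow_eq_zpow_iff]
    push_cast
    constructor <;> intro h <;> linear_combination h
  refine ⟨fun h ↦ hw_comm.mp (by rw [h]), fun h ↦ ?_⟩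
  refine AlgEquiv.coe_toAlgHom_injective (algHom_ext_of_adjoin_eq_top hgen ?_)
  rintro y (rfl | rfl)
  · exact hζ_comm
  · exact hw_comm.mpr h

end AlgEquiv

section IsGalois

variable {K L : Type*} [Field K] [Field L] [Algebra K L] [IsGalois K L] {n : ℕ} [NeZero n]
  {ζ w : L} {t x : Gal(L/K) → ℤ}

theorem zpow_mul_pow_mem_range_algebraMap_iff (hζ : IsPrimitiveRoot ζ n) (hw : w ≠ 0)
    (ht : ∀ σ, σ ζ = ζ ^ (t σ + 1)) (hx : ∀ σ, σ w = ζ ^ x σ * w) (k : ℤ) (m : ℕ) :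
    ζ ^ k * w ^ m ∈ Set.range (algebraMap K L) ↔ ∀ σ, (t σ : ZMod n) * k + x σ * m = 0 := by
  simp only [InfiniteGalois.mem_range_algebraMap_iff_fixed,
    apply_zpow_mul_pow_eq_self_iff hζ hw (ht _) (hx _)]

theorem exists_pow_eq_pow_of_mul_comm (hζ : IsPrimitiveRoot ζ n) (hw : w ≠ 0) {a : K}
    (hwa : w ^ n = algebraMap K L a)
    (ht : ∀ σ, σ ζ = ζ ^ (t σ + 1)) (hx : ∀ σ, σ w = ζ ^ x σ * w)
    (hcomm : ∀ σ τ, (t σ : ZMod n) * x τ = t τ * x σ) :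
    ∃ m : ℕ, m ∣ n ∧ (∃ ζm : K, IsPrimitiveRoot ζm m) ∧ ∃ b : K, a ^ m = b ^ n := by
  have hfixed := zpow_mul_pow_mem_range_algebraMap_iff hζ hw ht hx
  obtain ⟨m, hmn, hJ⟩ :=
    ZMod.exists_dvd_and_eq_span_natCast (Ideal.span (Set.range fun σ ↦ (t σ : ZMod n)))
  obtain ⟨d, rfl⟩ := hmn
  have ht_mem : ∀ σ, ∃ u, u * m = (t σ : ZMod (m * d)) := fun σ ↦
    Ideal.mem_span_singleton'.mp (hJ ▸ Ideal.subset_span ⟨σ, rfl⟩)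
  obtain ⟨c, hc⟩ := Finsupp.mem_span_range_iff_exists_finsupp.mp
    (hJ ▸ Ideal.mem_span_singleton_self (m : ZMod (m * d)))
  obtain ⟨y, hy⟩ := ZMod.intCast_surjective (c.sum fun σ a ↦ a * (x σ : ZMod (m * d)))
  obtain ⟨ζm, hζm⟩ := (hfixed d 0).mpr fun σ ↦ by
    obtain ⟨u, hu⟩ := ht_mem σ
    rw [← hu]
    push_cast
    rw [mul_assoc, ← Nat.cast_mul, ZMod.natCast_self]
    ring
  obtain ⟨b, hb⟩ := (hfixed (-y) m).mpr fun σ ↦ by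
    have := Finset.sum_mul_mul_eq_mul_sum_mul c.support (c := c) hcomm σ
    simp only [Finsupp.sum, smul_eq_mul] at hc hy
    rw [hc, ← hy] at this
    push_cast
    linear_combination this
  refine ⟨m, dvd_mul_right m d, ⟨ζm, ?_⟩, b, ?_⟩
  · refine IsPrimitiveRoot.of_map_of_injective ?_ (FaithfulSMul.algebraMap_injective K L)
    rw [hζm, zpow_natCast, pow_zero, mul_one]
    exact hζ.pow (Nat.pos_of_ne_zero (NeZero.ne _)) (mul_comm m d)
  · apply FaithfulSMul.algebraMap_injective K L
    have hζy : (ζ ^ (-y)) ^ (m * d) = 1 := by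
      rw [← zpow_natCast, ← zpow_mul, mul_comm, zpow_mul, zpow_natCast, hζ.pow_eq_one, one_zpow]
    rw [map_pow, map_pow, hb, ← hwa, mul_pow, hζy, one_mul, ← pow_mul, ← pow_mul, mul_comm]

theorem mul_comm_of_pow_eq_pow (hζ : IsPrimitiveRoot ζ n) (hw : w ≠ 0) {a b : K} (ha : a ≠ 0)
    (hwa : w ^ n = algebraMap K L a)
    (ht : ∀ σ, σ ζ = ζ ^ (t σ + 1)) (hx : ∀ σ, σ w = ζ ^ x σ * w)
    {m : ℕ} (hmn : m ∣ n) {ζm : K} (hζm : IsPrimitiveRoot ζm m) (hab : a ^ m = b ^ n)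
    (σ τ : Gal(L/K)) :
    (t σ : ZMod n) * x τ = t τ * x σ := by
  have hfixed := zpow_mul_pow_mem_range_algebraMap_iff hζ hw ht hx
  obtain ⟨d, rfl⟩ := hmn
  obtain ⟨hm, hd⟩ := mul_ne_zero_iff.mp (NeZero.ne (m * d))
  have : NeZero m := ⟨hm⟩
  have hζd : ζ ^ (d : ℤ) * w ^ 0 ∈ Set.range (algebraMap K L) := by
    obtain ⟨i, -, hi⟩ := (hζm.map_of_injective (FaithfulSMul.algebraMap_injective K L)
      ).eq_pow_of_pow_eq_one (ξ := ζ ^ d) (by rw [← pow_mul, mul_comm, hζ.pow_eq_one])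
    exact ⟨ζm ^ i, by rw [map_pow, hi, zpow_natCast, pow_zero, mul_one]⟩
  have ht_mul : ∀ σ, ∃ u, (t σ : ZMod (m * d)) = m * u := fun σ ↦
    ZMod.exists_eq_mul_of_mul_eq_zero hd (by simpa using (hfixed d 0).mp hζd σ)
  have hb : algebraMap K L b ≠ 0 := by
    rw [_root_.map_ne_zero]
    rintro rfl
    exact ha (pow_eq_zero_iff hm |>.mp (by rw [hab, zero_pow (NeZero.ne _)]))
  obtain ⟨k, hk⟩ := hζ.exists_zpow_mul_eq_of_pow_eq_pow (y := w ^ m) hb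
    (by rw [← pow_mul, mul_comm, pow_mul, hwa, ← map_pow, ← map_pow, hab])
  have hx_mul := (hfixed (-k) m).mp ⟨b, by
    rw [hk, ← mul_assoc, ← zpow_add₀ (hζ.ne_zero (NeZero.ne _)), neg_add_cancel, zpow_zero,
      one_mul]⟩
  obtain ⟨u, hu⟩ := ht_mul σ
  obtain ⟨v, hv⟩ := ht_mul τ
  push_cast at hx_mul
  linear_combination (x τ - k * v : ZMod (m * d)) * hu - (x σ - k * u) * hv + u * hx_mul τ
    - v * hx_mul σ

theorem forall_mul_comm_iff_exists_pow_eq_pow (hζ : IsPrimitiveRoot ζ n) {a : K} (ha : a ≠ 0)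
    (hwa : w ^ n = algebraMap K L a) (hgen : K⟮ζ, w⟯ = ⊤) :
    (∀ σ τ : Gal(L/K), σ * τ = τ * σ) ↔
      ∃ m : ℕ, m ∣ n ∧ (∃ ζm : K, IsPrimitiveRoot ζm m) ∧ ∃ b : K, a ^ m = b ^ n := by
  have hζ0 : ζ ≠ 0 := hζ.ne_zero (NeZero.ne n)
  have hw : w ≠ 0 := by
    rintro rfl
    exact ha (by simpa [NeZero.ne n] using hwa.symm)
  choose t ht using fun σ : Gal(L/K) ↦ hζ.exists_zpow_mul_eq_of_pow_eq_pow hζ0 (y := σ ζ)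
    (by rw [← map_pow, hζ.pow_eq_one, map_one])
  simp only [← zpow_add_one₀ hζ0] at ht
  choose x hx using fun σ : Gal(L/K) ↦ hζ.exists_zpow_mul_eq_of_pow_eq_pow hw (y := σ w)
      (by rw [← map_pow, hwa, AlgEquiv.commutes])
  simp only [algEquiv_mul_comm_iff hζ hw hgen (ht _) (hx _) (ht _) (hx _)]
  exact ⟨exists_pow_eq_pow_of_mul_comm hζ hw hwa ht hx,
    fun ⟨_, hmn, ⟨_, hζm⟩, _, hab⟩ ↦ mul_comm_of_pow_eq_pow hζ hw ha hwa ht hx hmn hζm hab⟩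

end IsGalois

theorem isGalois_adjoin_primitiveRoot_root {K E : Type*} [Field K] [Field E] [Algebra K E]
    {n : ℕ} {a : K} (hn : (n : K) ≠ 0) (ha : a ≠ 0) {ζ r : E} (hζ : IsPrimitiveRoot ζ n)
    (hr : r ^ n = algebraMap K E a) : IsGalois K K⟮ζ, r⟯ := by
  have : NeZero n := ⟨by rintro rfl; simp at hn⟩
  have hr0 : r ≠ 0 := by
    rintro rfl
    exact ha (by simpa [NeZero.ne n] using hr.symm)
  have hp : (X ^ n - C a : K[X]) ≠ 0 := X_pow_sub_C_ne_zero (NeZero.pos n) a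
  have mem_rootSet_iff (y : E) : y ∈ (X ^ n - C a).rootSet E ↔ y ^ n = r ^ n := by
    simp [mem_rootSet, hp, hr, sub_eq_zero]
  have hroots : adjoin K ((X ^ n - C a).rootSet E) = K⟮ζ, r⟯ := by
    apply le_antisymm
    · refine adjoin_le_iff.mpr fun y hy ↦ ?_
      obtain ⟨k, rfl⟩ := hζ.exists_zpow_mul_eq_of_pow_eq_pow hr0 ((mem_rootSet_iff y).mp hy)
      exact mul_mem (zpow_mem (subset_adjoin _ _ (by simp)) _) (subset_adjoin _ _ (by simp))
    · have hrr : r ∈ (X ^ n - C a).rootSet E := (mem_rootSet_iff r).mpr rfl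
      have hζr : ζ * r ∈ (X ^ n - C a).rootSet E := by
        rw [mem_rootSet_iff, mul_pow, hζ.pow_eq_one, one_mul]
      refine adjoin_le_iff.mpr ?_
      rintro y (rfl | rfl)
      · simpa [hr0] using div_mem (subset_adjoin _ _ hζr) (subset_adjoin _ _ hrr)
      · exact subset_adjoin _ _ hrr
  have hsplit : ((X ^ n - C a).map (algebraMap K E)).Splits := by
    simpa using X_pow_sub_C_splits_of_isPrimitiveRoot hζ hr
  have := adjoin_rootSet_isSplittingField hsplit
  rw [← hroots]
  exact IsGalois.of_separable_splitting_field (separable_X_pow_sub_C a hn ha)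

theorem stmt18_general (K Kbar : Type*) [Field K] [Field Kbar] [Algebra K Kbar]
    (n : ℕ) (hchar : (n : K) ≠ 0)
    (a : K) (ha : a ≠ 0)
    (ζ : Kbar) (hζ : IsPrimitiveRoot ζ n)
    (r : Kbar) (hr : r ^ n = algebraMap K Kbar a) :
    (∀ σ τ : (IntermediateField.adjoin K ({ζ, r} : Set Kbar)) ≃ₐ[K]
        (IntermediateField.adjoin K ({ζ, r} : Set Kbar)), σ * τ = τ * σ) ↔
      ∃ m : ℕ, m ∣ n ∧ (∃ ζm : K, IsPrimitiveRoot ζm m) ∧ ∃ b : K, a ^ m = b ^ n := by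
  have : NeZero n := ⟨by rintro rfl; simp at hchar⟩
  have : IsGalois K K⟮ζ, r⟯ := isGalois_adjoin_primitiveRoot_root hchar ha hζ hr
  let z : K⟮ζ, r⟯ := ⟨ζ, subset_adjoin _ _ (by simp)⟩
  let w : K⟮ζ, r⟯ := ⟨r, subset_adjoin _ _ (by simp)⟩
  have hgen : K⟮z, w⟯ = ⊤ := by
    apply lift_injective
    rw [lift_adjoin, lift_top, Set.image_pair]
  exact forall_mul_comm_iff_exists_pow_eq_pow (hζ.of_map_of_injective (f := (K⟮ζ, r⟯).val)
    Subtype.val_injective) ha (Subtype.ext hr) hgen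

/-- Schinzel's theorem on abelian radical extensions: for `a ∈ K^×` and `n ≥ 1` not
divisible by `char K`, the (Galois) extension `K(ζ_n, a^{1/n})/K` is abelian if and only
if `a^m = b^n` for some `b ∈ K^×` and some `m ∣ n` with `ζ_m ∈ K`. -/
theorem stmt18 (K Kbar : Type*) [Field K] [Field Kbar] [Algebra K Kbar]
    [IsAlgClosure K Kbar]
    (n : ℕ) (hn : 1 ≤ n) (hchar : (n : K) ≠ 0)
    (a : K) (ha : a ≠ 0)
    (ζ : Kbar) (hζ : IsPrimitiveRoot ζ n)
    (r : Kbar) (hr : r ^ n = algebraMap K Kbar a) :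
    (∀ σ τ : (IntermediateField.adjoin K ({ζ, r} : Set Kbar)) ≃ₐ[K]
        (IntermediateField.adjoin K ({ζ, r} : Set Kbar)), σ * τ = τ * σ) ↔
      ∃ m : ℕ, m ∣ n ∧ (∃ ζm : K, IsPrimitiveRoot ζm m) ∧ ∃ b : K, a ^ m = b ^ n :=
  stmt18_general K Kbar n hchar a ha ζ hζ r hr
end
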